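/- Let [X, X+1, X+2] be a self-dual sequence of period 3^n over Z_3, where X has length 3^{n-1} and X+c means adding the constant c mod 3 to every entry. For any word Z of length 3^{n-1} over Z_3 starting with 0 and any word Y of length 3^{n-1} over Z_3, the sequence [V, V+1, V+2] with V = (Z, Z+Y, Z+2Y+X) is a self-dual sequence of period 3^{n+1} over Z_3; distinct pairs (Z,Y) give distinct sequences; and every self-dual sequence of period 3^{n+1} over Z_3 arises this way. -/
import Mathlib

/-- `d` is a period of the sequence `s` over `Z_3`. -/
def IsPeriodOf (s : ℕ → ZMod 3) (d : ℕ) : Prop := ∀ i, s (i + d) = s i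

/-- `d` is the least (exact) period of `s`. -/
def IsLeastPeriod (s : ℕ → ZMod 3) (d : ℕ) : Prop :=
  0 < d ∧ IsPeriodOf s d ∧ ∀ e, 0 < e → IsPeriodOf s e → d ≤ e

/-- The cyclic sequence `[W, W+1, W+2]` of length `3N`, built from a word `W` of
length `N` over `Z_3` (extended periodically with period `3N`). -/
def seq3 (N : ℕ) (W : ℕ → ZMod 3) : ℕ → ZMod 3 :=
  fun i => W (i % (3 * N) % N) + ((i % (3 * N) / N : ℕ) : ZMod 3)

/-- The word `V = (Z, Z+Y, Z+2Y+X)` of length `3N`, built from words `X, Y, Z` of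
length `N` over `Z_3`. -/
def mkV (N : ℕ) (X Y Z : ℕ → ZMod 3) : ℕ → ZMod 3 :=
  fun j =>
    if j < N then Z j
    else if j < 2 * N then Z (j - N) + Y (j - N)
    else Z (j - 2 * N) + 2 * Y (j - 2 * N) + X (j - 2 * N)

lemma periodOf_iter {s : ℕ → ZMod 3} {d : ℕ} (h : IsPeriodOf s d) :
    ∀ q i, s (i + q * d) = s i := by
  intro q
  induction q with
  | zero => simp
  | succ q ih =>
    intro i
    rw [show i + (q+1)*d = (i + q*d) + d by ring, h, ih]

lemma periodOf_dvd {s : ℕ → ZMod 3} {d e : ℕ} (h : IsPeriodOf s d) (hde : d ∣ e) :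
    IsPeriodOf s e := by
  obtain ⟨c, rfl⟩ := hde
  intro i
  rw [mul_comm, periodOf_iter h]

lemma periodOf_mod {s : ℕ → ZMod 3} {a b : ℕ} (ha : IsPeriodOf s a)
    (hb : IsPeriodOf s b) : IsPeriodOf s (b % a) := by
  intro i
  calc s (i + b % a) = s (i + b % a + b / a * a) := (periodOf_iter ha _ _).symm
    _ = s (i + b) := by rw [add_assoc, Nat.mod_add_div']
    _ = s i := hb i

lemma periodOf_gcd (s : ℕ → ZMod 3) :
    ∀ a b, IsPeriodOf s a → IsPeriodOf s b → IsPeriodOf s (Nat.gcd a b) := by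
  intro a
  induction a using Nat.strong_induction_on with
  | _ a ih =>
    intro b ha hb
    rcases Nat.eq_zero_or_pos a with rfl | hpos
    · simpa [Nat.gcd_zero_left] using hb
    · rw [Nat.gcd_rec]
      exact ih (b % a) (Nat.mod_lt _ hpos) a (periodOf_mod ha hb) ha

lemma least_dvd {s : ℕ → ZMod 3} {d : ℕ} (h : IsLeastPeriod s d) {e : ℕ}
    (he : IsPeriodOf s e) : d ∣ e := by
  obtain ⟨hd, hpd, hmin⟩ := h
  have hr : IsPeriodOf s (e % d) := periodOf_mod hpd he
  rcases Nat.eq_zero_or_pos (e % d) with h0 | hpos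
  · exact Nat.dvd_of_mod_eq_zero h0
  · exact absurd (hmin _ hpos hr) (by have := Nat.mod_lt e hd; omega)

lemma seq3_eval {N : ℕ} (hN : 0 < N) (W : ℕ → ZMod 3) {j c i : ℕ}
    (hj : j < N) (hi : i = j + c * N) :
    seq3 N W i = W j + ((c % 3 : ℕ) : ZMod 3) := by
  obtain ⟨q, r, hr, rfl⟩ : ∃ q r, r < 3 ∧ c = 3 * q + r :=
    ⟨c / 3, c % 3, Nat.mod_lt _ (by norm_num), (Nat.div_add_mod c 3).symm⟩
  subst hi
  have e1 : (j + (3 * q + r) * N) % (3 * N) = j + r * N := by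
    rw [show j + (3 * q + r) * N = (j + r * N) + q * (3 * N) by ring,
      Nat.add_mul_mod_self_right]
    exact Nat.mod_eq_of_lt (by interval_cases r <;> omega)
  have e2 : (j + r * N) % N = j := by
    rw [Nat.add_mul_mod_self_right]
    exact Nat.mod_eq_of_lt hj
  have e3 : (j + r * N) / N = r := by
    rw [Nat.add_mul_div_right _ _ hN, Nat.div_eq_of_lt hj, zero_add]
  have e4 : (3 * q + r) % 3 = r := by omega
  simp only [seq3, e1, e2, e3, e4]

lemma seq3_shift {N : ℕ} (hN : 0 < N) (W : ℕ → ZMod 3) (i : ℕ) :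
    seq3 N W (i + N) = seq3 N W i + 1 := by
  obtain ⟨j, c, hj, rfl⟩ : ∃ j c, j < N ∧ i = j + c * N :=
    ⟨i % N, i / N, Nat.mod_lt _ hN, by rw [Nat.mod_add_div']⟩
  rw [seq3_eval hN W hj rfl,
    seq3_eval hN W hj (show j + c * N + N = j + (c + 1) * N by ring),
    ZMod.natCast_mod, ZMod.natCast_mod]
  push_cast
  ring

lemma shift_iter {t : ℕ → ZMod 3} {M : ℕ} (h : ∀ i, t (i + M) = t i + 1) :
    ∀ c i, t (i + c * M) = t i + c := by
  intro c
  induction c with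
  | zero => simp
  | succ c ih =>
    intro i
    rw [show i + (c+1)*M = (i + c*M) + M by ring, h, ih]
    push_cast
    ring

lemma least3 (m : ℕ) (W : ℕ → ZMod 3) :
    IsLeastPeriod (seq3 (3 ^ m) W) (3 ^ (m + 1)) := by
  have hN : 0 < (3:ℕ) ^ m := pow_pos (by norm_num) m
  have hone : (1 : ZMod 3) + 1 + 1 = 0 := by decide
  have hper : IsPeriodOf (seq3 (3 ^ m) W) (3 ^ (m + 1)) := by
    intro i
    rw [show i + 3 ^ (m+1) = i + 3 ^ m + 3 ^ m + 3 ^ m by rw [pow_succ]; ring,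
      seq3_shift hN, seq3_shift hN, seq3_shift hN]
    linear_combination hone
  have hnot : ¬ IsPeriodOf (seq3 (3 ^ m) W) (3 ^ m) := by
    intro hp
    have h1 := hp 0
    have h2 := seq3_shift hN W 0
    rw [h1] at h2
    exact one_ne_zero (by linear_combination -h2)
  refine ⟨pow_pos (by norm_num) _, hper, ?_⟩
  intro e he hpe
  have hg : IsPeriodOf (seq3 (3 ^ m) W) (Nat.gcd e (3 ^ (m + 1))) :=
    periodOf_gcd _ _ _ hpe hper
  obtain ⟨j, hj, hgeq⟩ := (Nat.dvd_prime_pow Nat.prime_three).mp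
    (Nat.gcd_dvd_right e (3 ^ (m + 1)))
  rcases Nat.lt_or_ge j (m + 1) with hjm | hjm
  · exfalso
    apply hnot
    apply periodOf_dvd hg
    rw [hgeq]
    exact pow_dvd_pow 3 (by omega)
  · have : Nat.gcd e (3 ^ (m + 1)) = 3 ^ (m + 1) := by
      rw [hgeq]; congr 1; omega
    exact Nat.le_of_dvd he (this ▸ Nat.gcd_dvd_left e (3 ^ (m + 1)))

lemma mkV_zero {N j : ℕ} (hj : j < N) (X Y Z : ℕ → ZMod 3) :
    mkV N X Y Z j = Z j := by simp [mkV, hj]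

lemma mkV_one {N j : ℕ} (_hj : j < N) (X Y Z : ℕ → ZMod 3) :
    mkV N X Y Z (j + N) = Z j + Y j := by
  have h1 : ¬ (j + N < N) := by omega
  have h2 : j + N < 2 * N := by omega
  have h3 : j + N - N = j := by omega
  simp [mkV, h1, h2, h3]

lemma mkV_two {N j : ℕ} (hj : j < N) (X Y Z : ℕ → ZMod 3) :
    mkV N X Y Z (j + 2 * N) = Z j + 2 * Y j + X j := by
  have h1 : ¬ (j + 2 * N < N) := by omega
  have h2 : ¬ (j + 2 * N < 2 * N) := by omega
  have h3 : j + 2 * N - 2 * N = j := by omega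
  simp [mkV, h1, h2, h3]

lemma sum3 {N : ℕ} (hN : 0 < N) (X Y Z : ℕ → ZMod 3) (i : ℕ) :
    seq3 (3 * N) (mkV N X Y Z) (i + 2 * N) + seq3 (3 * N) (mkV N X Y Z) (i + N) +
      seq3 (3 * N) (mkV N X Y Z) i = seq3 N X i := by
  have hN3 : 0 < 3 * N := by omega
  have h3 : (3 : ZMod 3) = 0 := by decide
  obtain ⟨j, b, hj, rfl⟩ : ∃ j b, j < N ∧ i = j + b * N :=
    ⟨i % N, i / N, Nat.mod_lt _ hN, by rw [Nat.mod_add_div']⟩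
  obtain ⟨q, r, hr, rfl⟩ : ∃ q r, r < 3 ∧ b = 3 * q + r :=
    ⟨b / 3, b % 3, Nat.mod_lt _ (by norm_num), (Nat.div_add_mod b 3).symm⟩
  have hj0 : j < 3 * N := by omega
  have hj1 : j + N < 3 * N := by omega
  have hj2 : j + 2 * N < 3 * N := by omega
  interval_cases r
  · rw [seq3_eval hN3 _ hj2 (show j + (3*q+0)*N + 2*N = (j + 2*N) + q*(3*N) by ring),
      seq3_eval hN3 _ hj1 (show j + (3*q+0)*N + N = (j + N) + q*(3*N) by ring),
      seq3_eval hN3 _ hj0 (show j + (3*q+0)*N = j + q*(3*N) by ring),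
      seq3_eval hN X hj rfl,
      mkV_zero hj, mkV_one hj, mkV_two hj]
    simp only [ZMod.natCast_mod]
    push_cast
    linear_combination (Z j + Y j) * h3
  · rw [seq3_eval hN3 _ hj0 (show j + (3*q+1)*N + 2*N = j + (q+1)*(3*N) by ring),
      seq3_eval hN3 _ hj2 (show j + (3*q+1)*N + N = (j + 2*N) + q*(3*N) by ring),
      seq3_eval hN3 _ hj1 (show j + (3*q+1)*N = (j + N) + q*(3*N) by ring),
      seq3_eval hN X hj rfl,
      mkV_zero hj, mkV_one hj, mkV_two hj]
    simp only [ZMod.natCast_mod]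
    push_cast
    linear_combination (Z j + Y j) * h3
  · rw [seq3_eval hN3 _ hj1 (show j + (3*q+2)*N + 2*N = (j + N) + (q+1)*(3*N) by ring),
      seq3_eval hN3 _ hj0 (show j + (3*q+2)*N + N = j + (q+1)*(3*N) by ring),
      seq3_eval hN3 _ hj2 (show j + (3*q+2)*N = (j + 2*N) + q*(3*N) by ring),
      seq3_eval hN X hj rfl,
      mkV_zero hj, mkV_one hj, mkV_two hj]
    simp only [ZMod.natCast_mod]
    push_cast
    linear_combination (Z j + Y j) * h3

/-- Recursive construction of ternary self-dual sequences: if `[X, X+1, X+2]` is a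
self-dual sequence of least period `3^n` over `Z_3` (with `X` of length `3^{n-1}`),
then for every word `Z` of length `3^{n-1}` starting with `0` and every word `Y` of
length `3^{n-1}`, the sequence `[V, V+1, V+2]` with `V = (Z, Z+Y, Z+2Y+X)` is a
self-dual sequence of least period `3^{n+1}`; distinct pairs `(Z, Y)` give distinct
cyclic sequences; and every self-dual sequence of least period `3^{n+1}` over `Z_3`
arises this way (up to cyclic shift). -/
theorem stmt15 (n : ℕ) (hn : 1 ≤ n) (X : ℕ → ZMod 3)
    (hX : IsLeastPeriod (seq3 (3 ^ (n - 1)) X) (3 ^ n)) :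
    (∀ Z Y : ℕ → ZMod 3, Z 0 = 0 →
      IsLeastPeriod (seq3 (3 ^ n) (mkV (3 ^ (n - 1)) X Y Z)) (3 ^ (n + 1)) ∧
      (∀ i, seq3 (3 ^ n) (mkV (3 ^ (n - 1)) X Y Z) (i + 3 ^ n) =
        seq3 (3 ^ n) (mkV (3 ^ (n - 1)) X Y Z) i + 1)) ∧
    (∀ Z Y Z' Y' : ℕ → ZMod 3, Z 0 = 0 → Z' 0 = 0 →
      (∃ k : ℕ, ∀ i, seq3 (3 ^ n) (mkV (3 ^ (n - 1)) X Y' Z') i =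
        seq3 (3 ^ n) (mkV (3 ^ (n - 1)) X Y Z) (i + k)) →
      ∀ j < 3 ^ (n - 1), Z j = Z' j ∧ Y j = Y' j) ∧
    (∀ t : ℕ → ZMod 3, IsLeastPeriod t (3 ^ (n + 1)) →
      (∀ i, t (i + 3 ^ n) = t i + 1) →
      ∃ X' Z Y : ℕ → ZMod 3, Z 0 = 0 ∧
        IsLeastPeriod (seq3 (3 ^ (n - 1)) X') (3 ^ n) ∧
        ∃ k : ℕ, ∀ i, t i = seq3 (3 ^ n) (mkV (3 ^ (n - 1)) X' Y Z) (i + k)) := by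
  have hN : 0 < (3:ℕ) ^ (n - 1) := pow_pos (by norm_num) _
  have hM : 0 < (3:ℕ) ^ n := pow_pos (by norm_num) _
  have hMeq : (3:ℕ) ^ n = 3 * 3 ^ (n - 1) := by
    conv_lhs => rw [show n = (n - 1) + 1 by omega]
    rw [pow_succ]
    ring
  have h3 : (3 : ZMod 3) = 0 := by decide
  refine ⟨?_, ?_, ?_⟩
  · -- Part 1
    intro Z Y _
    refine ⟨least3 n _, fun i => seq3_shift hM _ i⟩
  · -- Part 2
    rintro Z Y Z' Y' hZ0 hZ'0 ⟨k, hk⟩ j hjN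
    set N := (3:ℕ) ^ (n - 1) with hNdef
    have hk' : ∀ i, seq3 (3 * N) (mkV N X Y' Z') i =
        seq3 (3 * N) (mkV N X Y Z) (i + k) := by
      rw [← hMeq]; exact hk
    -- k is a period of seq3 N X
    have hper : IsPeriodOf (seq3 N X) k := by
      intro i
      have e1 := sum3 hN X Y Z (i + k)
      have e2 := sum3 hN X Y' Z' i
      rw [show i + k + 2 * N = (i + 2 * N) + k by ring, ← hk' (i + 2 * N),
        show i + k + N = (i + N) + k by ring, ← hk' (i + N), ← hk' i] at e1
      rw [← e1, ← e2]
    obtain ⟨q, rfl⟩ : (3:ℕ) ^ n ∣ k := least_dvd hX hper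
    -- hence the shift adds the constant q
    have hshift : ∀ i, seq3 (3 ^ n) (mkV N X Y Z) (i + 3 ^ n * q) =
        seq3 (3 ^ n) (mkV N X Y Z) i + q := by
      intro i
      rw [mul_comm]
      exact shift_iter (seq3_shift hM _) q i
    have heval0 : ∀ (Y₀ Z₀ : ℕ → ZMod 3) (j₀ : ℕ), j₀ < 3 ^ n →
        seq3 (3 ^ n) (mkV N X Y₀ Z₀) j₀ = mkV N X Y₀ Z₀ j₀ := by
      intro Y₀ Z₀ j₀ hj₀
      have := seq3_eval hM (mkV N X Y₀ Z₀) hj₀ (show j₀ = j₀ + 0 * 3 ^ n by ring)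
      simpa using this
    have hq0 : (q : ZMod 3) = 0 := by
      have h0 := hk 0
      rw [hshift 0] at h0
      rw [heval0 Y Z 0 hM, heval0 Y' Z' 0 hM, mkV_zero hN, mkV_zero hN, hZ0, hZ'0] at h0
      linear_combination -h0
    have hsame : ∀ i, seq3 (3 ^ n) (mkV N X Y' Z') i =
        seq3 (3 ^ n) (mkV N X Y Z) i := by
      intro i
      rw [hk i, hshift i, hq0, add_zero]
    constructor
    · have h1 := hsame j
      rw [heval0 Y Z j (by omega), heval0 Y' Z' j (by omega),
        mkV_zero hjN, mkV_zero hjN] at h1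
      exact h1.symm
    · have h1 := hsame (j + N)
      have hjN' : j + N < 3 ^ n := by omega
      rw [heval0 Y Z _ hjN', heval0 Y' Z' _ hjN', mkV_one hjN, mkV_one hjN] at h1
      have h2 := hsame j
      rw [heval0 Y Z j (by omega), heval0 Y' Z' j (by omega),
        mkV_zero hjN, mkV_zero hjN] at h2
      rw [h2] at h1
      exact (add_left_cancel h1).symm
  · -- Part 3
    intro t hlt hself
    set N := (3:ℕ) ^ (n - 1) with hNdef
    -- choose the shift k0 making t k0 = 0
    obtain ⟨c, hc3, hc⟩ : ∃ c : ℕ, c < 3 ∧ t 0 + (c : ZMod 3) = 0 := by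
      have h3cases : ∀ a : ZMod 3, a = 0 ∨ a = 1 ∨ a = 2 := by decide
      rcases h3cases (t 0) with h | h | h
      · exact ⟨0, by norm_num, by simp [h]⟩
      · exact ⟨2, by norm_num, by rw [h]; decide⟩
      · exact ⟨1, by norm_num, by rw [h]; decide⟩
    set k0 := c * 3 ^ n with hk0def
    have ht0 : t k0 = 0 := by
      have := shift_iter hself c 0
      rw [zero_add] at this
      rw [hk0def, this, hc]
    refine ⟨fun j => t (j + 2 * N + k0) + t (j + N + k0) + t (j + k0),
      fun j => t (j + k0),
      fun j => t (j + N + k0) - t (j + k0), by simpa using ht0, ?_, ?_⟩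
    · have := least3 (n - 1)
        (fun j => t (j + 2 * N + k0) + t (j + N + k0) + t (j + k0))
      rwa [show n - 1 + 1 = n by omega] at this
    · -- the main identity
      have hmain : ∀ j' < 3 ^ n, t (j' + k0) =
          mkV N (fun j => t (j + 2 * N + k0) + t (j + N + k0) + t (j + k0))
            (fun j => t (j + N + k0) - t (j + k0)) (fun j => t (j + k0)) j' := by
        intro j' hj'
        rcases Nat.lt_or_ge j' N with h0 | h0
        · rw [mkV_zero h0]
        · rcases Nat.lt_or_ge j' (2 * N) with h1 | h1
          · obtain ⟨j, hj, rfl⟩ : ∃ j, j < N ∧ j' = j + N := ⟨j' - N, by omega, by omega⟩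
            rw [mkV_one hj]
            ring
          · obtain ⟨j, hj, rfl⟩ : ∃ j, j < N ∧ j' = j + 2 * N :=
              ⟨j' - 2 * N, by omega, by omega⟩
            rw [mkV_two hj]
            linear_combination (-(t (j + N + k0))) * h3
      have hclaim : ∀ i, t (i + k0) =
          seq3 (3 ^ n) (mkV N (fun j => t (j + 2 * N + k0) + t (j + N + k0) + t (j + k0))
            (fun j => t (j + N + k0) - t (j + k0)) (fun j => t (j + k0))) i := by
        intro i
        obtain ⟨j', c', hj', rfl⟩ : ∃ j' c', j' < 3 ^ n ∧ i = j' + c' * 3 ^ n :=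
          ⟨i % 3 ^ n, i / 3 ^ n, Nat.mod_lt _ hM, by rw [Nat.mod_add_div']⟩
        rw [seq3_eval hM _ hj' rfl, ZMod.natCast_mod,
          show j' + c' * 3 ^ n + k0 = (j' + k0) + c' * 3 ^ n by ring,
          shift_iter hself c' (j' + k0), hmain j' hj']
      have hk0le : k0 ≤ 3 ^ (n + 1) := by
        have : c * 3 ^ n ≤ 2 * 3 ^ n := Nat.mul_le_mul_right _ (by omega)
        have h2 : (3:ℕ) ^ (n + 1) = 3 * 3 ^ n := by rw [pow_succ]; ring
        omega
      refine ⟨3 ^ (n + 1) - k0, fun i => ?_⟩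
      have hp : t (i + 3 ^ (n + 1)) = t i := hlt.2.1 i
      rw [← hclaim (i + (3 ^ (n + 1) - k0)),
        show i + (3 ^ (n + 1) - k0) + k0 = i + 3 ^ (n + 1) by omega, hp]
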